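/- Let S = {s₁,…,sₙ} be a factor-closed set of distinct positive integers, and let g : ℕ → ℝ be a function such that (g * μ)(k) > 0 for all positive integers k, where μ is the Möbius function and * is Dirichlet convolution. Then the determinant of the n×n matrix with (i,j) entry g(gcd(s_i, s_j)) equals ∏_{i=1}^{n} (g * μ)(s_i). -/

import Mathlib

/-!
Smith's factorisation. By Möbius inversion g(m) = ∑_{d ∣ m} (g * μ)(d), and since S is
factor-closed the divisors of gcd(sᵢ, sⱼ) are exactly the s_k dividing both sᵢ and sⱼ. Hence the
gcd matrix is E D Eᵀ, where E is the divisibility matrix of S (E_{ik} = 1 iff s_k ∣ sᵢ) and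
D = diag((g * μ)(s_k)). Ordering S increasingly makes E unitriangular, so det E = 1.
-/

open scoped ArithmeticFunction.Moebius
open Finset Matrix

section

variable {R : Type*} [CommRing R] {ι : Type*}

def moebiusConv (g : ℕ → R) (k : ℕ) : R := ∑ d ∈ k.divisors, g d * (μ (k / d) : R)

theorem sum_divisors_moebiusConv (g : ℕ → R) {m : ℕ} (hm : 0 < m) :
    ∑ d ∈ m.divisors, moebiusConv g d = g m := by
  refine (ArithmeticFunction.sum_eq_iff_sum_smul_moebius_eq (f := moebiusConv g) (g := g)).mpr
    (fun k _ => ?_) m hm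
  rw [moebiusConv, Nat.sum_divisorsAntidiagonal' (f := fun x y => (μ x : ℤ) • g y)]
  exact sum_congr rfl fun d _ => by rw [zsmul_eq_mul, mul_comm]

variable (R) in
def divisibilityMatrix (s : ι → ℕ) : Matrix ι ι R := of fun i j => if s j ∣ s i then 1 else 0

variable [Fintype ι]

theorem sum_filter_dvd_eq_sum_divisors {M : Type*} [AddCommMonoid M] {s : ι → ℕ}
    (hinj : Function.Injective s) {m : ℕ} (hm : 0 < m)
    (hcl : ∀ d ∈ m.divisors, ∃ k, s k = d) (f : ℕ → M) :
    ∑ k ∈ univ.filter (fun k => s k ∣ m), f (s k) = ∑ d ∈ m.divisors, f d := by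
  refine sum_nbij s ?_ hinj.injOn ?_ fun _ _ => rfl
  · exact fun k hk => Nat.mem_divisors.mpr ⟨(mem_filter.mp hk).2, hm.ne'⟩
  · intro d hd
    obtain ⟨k, rfl⟩ := hcl d hd
    exact ⟨k, by simpa using Nat.dvd_of_mem_divisors hd, rfl⟩

variable [DecidableEq ι]

theorem divisibilityMatrix_mul_diagonal_mul_transpose_apply (s : ι → ℕ) (f : ι → R) (i j : ι) :
    (divisibilityMatrix R s * diagonal f * (divisibilityMatrix R s)ᵀ) i j
      = ∑ k ∈ univ.filter (fun k => s k ∣ Nat.gcd (s i) (s j)), f k := by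
  rw [mul_apply]
  simp only [mul_diagonal, transpose_apply, divisibilityMatrix, of_apply, sum_filter,
    Nat.dvd_gcd_iff, ite_and]
  refine sum_congr rfl fun k _ => ?_
  split_ifs <;> simp

theorem det_divisibilityMatrix {s : ι → ℕ} (hs : ∀ i, 0 < s i) (hinj : Function.Injective s) :
    (divisibilityMatrix R s).det = 1 := by
  -- in the order of the values of `s`, a proper divisor comes first
  let : LinearOrder ι := LinearOrder.lift' s hinj
  convert det_of_isLowerTriangular (divisibilityMatrix R s) ?_
  · simp [divisibilityMatrix]
  · intro i j hij
    have hlt : s i < s j := hij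
    exact if_neg fun hdvd => hlt.not_ge (Nat.le_of_dvd (hs i) hdvd)

theorem gcdMatrix_eq_divisibilityMatrix_mul_diagonal_mul_transpose (g : ℕ → R) {s : ι → ℕ}
    (hs : ∀ i, 0 < s i) (hinj : Function.Injective s)
    (hfc : ∀ i d, 0 < d → d ∣ s i → ∃ j, s j = d) :
    of (fun i j => g (Nat.gcd (s i) (s j))) = divisibilityMatrix R s
      * diagonal (fun k => moebiusConv g (s k)) * (divisibilityMatrix R s)ᵀ := by
  ext i j
  have hgcd : 0 < Nat.gcd (s i) (s j) := Nat.gcd_pos_of_pos_left _ (hs i)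
  have hcl : ∀ d ∈ (Nat.gcd (s i) (s j)).divisors, ∃ k, s k = d := fun d hd =>
    hfc i d (Nat.pos_of_mem_divisors hd) ((Nat.dvd_of_mem_divisors hd).trans (Nat.gcd_dvd_left _ _))
  rw [divisibilityMatrix_mul_diagonal_mul_transpose_apply,
    sum_filter_dvd_eq_sum_divisors hinj hgcd hcl, sum_divisors_moebiusConv g hgcd, of_apply]

end

open ArithmeticFunction ArithmeticFunction.Moebius in
theorem meet_matrix_det_factor_closed_general (n : ℕ) (s : Fin n → ℕ) (g : ℕ → ℝ)
    (hs : ∀ i, 0 < s i) (hsinj : Function.Injective s)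
    (hfc : ∀ i d, 0 < d → d ∣ s i → ∃ j, s j = d) :
    (Matrix.of fun i j : Fin n => g (Nat.gcd (s i) (s j))).det
      = ∏ i, ∑ d ∈ (s i).divisors, g d * (μ ((s i) / d) : ℝ) := by
  rw [gcdMatrix_eq_divisibilityMatrix_mul_diagonal_mul_transpose g hs hsinj hfc, det_mul, det_mul,
    det_transpose, det_divisibilityMatrix hs hsinj, one_mul, mul_one, det_diagonal]
  rfl

open ArithmeticFunction ArithmeticFunction.Moebius in
theorem meet_matrix_det_factor_closed (n : ℕ) (s : Fin n → ℕ) (g : ℕ → ℝ)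
    (hs : ∀ i, 0 < s i) (hsinj : Function.Injective s)
    (hfc : ∀ i d, 0 < d → d ∣ s i → ∃ j, s j = d)
    (hpos : ∀ k : ℕ, 0 < k → 0 < ∑ d ∈ k.divisors, g d * (μ (k / d) : ℝ)) :
    (Matrix.of fun i j : Fin n => g (Nat.gcd (s i) (s j))).det
      = ∏ i, ∑ d ∈ (s i).divisors, g d * (μ ((s i) / d) : ℝ) :=
  meet_matrix_det_factor_closed_general n s g hs hsinj hfc
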